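/- For a fixed vertex set V with distinguished root r and a fixed partition P of V \ {r} into non-empty parts, the P-admissible maps g : V → V are in one-to-one correspondence with the r-rooted hypertrees having vertex set V and Prüfer partition P. -/

import Mathlib

open Finset

/-- Degree of a vertex: number of hyperedges containing it. -/
def hdeg (E : Finset (Finset ℕ)) (v : ℕ) : ℕ := (E.filter (fun e => v ∈ e)).card

/-- Two vertices are adjacent if they are distinct and lie in a common hyperedge. -/
def HAdj (E : Finset (Finset ℕ)) (v w : ℕ) : Prop := v ≠ w ∧ ∃ e ∈ E, v ∈ e ∧ w ∈ e

/-- A hypergraph is connected if any two vertices are joined by a path of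
consecutively adjacent vertices. -/
def HConnected (V : Finset ℕ) (E : Finset (Finset ℕ)) : Prop :=
  ∀ v ∈ V, ∀ w ∈ V, Relation.ReflTransGen (HAdj E) v w

/-- A (finite) hypergraph on vertex set `V`: hyperedges are subsets of `V`
of cardinality at least 2. -/
def IsHypergraph (V : Finset ℕ) (E : Finset (Finset ℕ)) : Prop :=
  ∀ e ∈ E, e ⊆ V ∧ 2 ≤ e.card

/-- A finite hypertree: a connected hypergraph with
`∑ size(e) = |V| + |E| - 1`. -/
def IsHypertree (V : Finset ℕ) (E : Finset (Finset ℕ)) : Prop :=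
  IsHypergraph V E ∧ HConnected V E ∧ (∑ e ∈ E, e.card) + 1 = V.card + E.card

/-- There is a walk of length `l` from `v` to `w`. -/
def HJoined (E : Finset (Finset ℕ)) (l : ℕ) (v w : ℕ) : Prop :=
  ∃ p : ℕ → ℕ, p 0 = v ∧ p l = w ∧ ∀ i < l, HAdj E (p i) (p (i + 1))

/-- Distance between two vertices: length of a shortest joining path. -/
noncomputable def hdist (E : Finset (Finset ℕ)) (v w : ℕ) : ℕ :=
  sInf {l | HJoined E l v w}

/-- `v` is the marked vertex of the hyperedge `e` of an `r`-rooted hypertree: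
the vertex of `e` closest to the root `r`. -/
def IsMarked (E : Finset (Finset ℕ)) (r : ℕ) (e : Finset ℕ) (v : ℕ) : Prop :=
  v ∈ e ∧ ∀ w ∈ e, hdist E r v ≤ hdist E r w

/-- `P` is a partition of the finite set `S` into non-empty parts. -/
def IsPartitionOf (S : Finset ℕ) (P : Finset (Finset ℕ)) : Prop :=
  (∀ s ∈ P, s.Nonempty) ∧ (∀ s ∈ P, ∀ t ∈ P, s ≠ t → Disjoint s t) ∧
    P.biUnion id = S

/-- A `P`-admissible map: a self-map of `V` (extended by the identity outside
`V`) fixing `r`, constant on each part of `P`, under whose iteration every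
vertex reaches the fix-point `r`. -/
def Admissible (V : Finset ℕ) (r : ℕ) (P : Finset (Finset ℕ))
    (g : ℕ → ℕ) : Prop :=
  g r = r ∧ (∀ v ∈ V, g v ∈ V) ∧ (∀ v, v ∉ V → g v = v) ∧
    (∀ s ∈ P, ∀ v ∈ s, ∀ w ∈ s, g v = g w) ∧
    ∀ v ∈ V, ∃ k : ℕ, g^[k] v = r

/-- The hypertree `E` is `r`-rooted with vertex set `V` and has Prüfer
partition `P` (given by its reduced hyperedges). -/
def HasPruferPartition (V : Finset ℕ) (r : ℕ) (E : Finset (Finset ℕ))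
    (P : Finset (Finset ℕ)) : Prop :=
  IsHypertree V E ∧ ∃ m : Finset ℕ → ℕ, (∀ e ∈ E, IsMarked E r e (m e)) ∧
    P = E.image (fun e => e.erase (m e)) ∧
    Set.InjOn (fun e : Finset ℕ => e.erase (m e)) ↑E

/-- `g` is the glue map of the rooted hypertree `E`. -/
def GlueRel (E : Finset (Finset ℕ)) (r : ℕ) (g : ℕ → ℕ) : Prop :=
  ∃ m : Finset ℕ → ℕ, (∀ e ∈ E, IsMarked E r e (m e)) ∧
    ∀ e ∈ E, ∀ v ∈ e.erase (m e), g v = m e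

/-! An admissible map `g` is turned into the hypergraph with hyperedges `s ∪ g s` for `s ∈ P`.
Its distance to the root `r` is the number of iterations of `g` needed to reach `r`, so `g s` is
the unique vertex of `s ∪ g s` closest to the root and the Prüfer partition is `P`.
Conversely, a rooted hypertree with Prüfer partition `P` has a glue map sending every unmarked
vertex of a hyperedge to its marked vertex: it is well defined because the reduced hyperedges
are the pairwise disjoint parts of `P`, and it strictly decreases the distance to the root.
The two constructions are mutually inverse. -/

section Walks

variable {E : Finset (Finset ℕ)} {r u v w l : ℕ}

lemma HAdj.symm (h : HAdj E v w) : HAdj E w v :=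
  ⟨h.1.symm, h.2.imp fun _ ⟨he, hv, hw⟩ => ⟨he, hw, hv⟩⟩

instance : Std.Symm (HAdj E) := ⟨fun _ _ => HAdj.symm⟩

lemma HJoined.snoc (h : HJoined E l u v) (ha : HAdj E v w) : HJoined E (l + 1) u w := by
  obtain ⟨p, h0, hl, hs⟩ := h
  refine ⟨fun i => if i ≤ l then p i else w, by simp [h0], by simp, fun i hi => ?_⟩
  rcases (Nat.lt_succ_iff.mp hi).lt_or_eq with hi | rfl
  · simpa [hi.le, Nat.succ_le_of_lt hi] using hs i hi
  · simpa [hl] using ha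

lemma HJoined.reflTransGen (h : HJoined E l u v) : Relation.ReflTransGen (HAdj E) u v := by
  induction l generalizing v with
  | zero =>
    obtain ⟨p, h0, hl, -⟩ := h
    rw [← hl, h0]
  | succ l ih =>
    obtain ⟨p, h0, hl, hs⟩ := h
    exact hl ▸ (ih ⟨p, h0, rfl, fun i hi => hs i (by omega)⟩).tail (hs l (by omega))

lemma HConnected.exists_hjoined {V : Finset ℕ} (hc : HConnected V E) (hr : r ∈ V)
    (hw : w ∈ V) : ∃ l, HJoined E l r w := by
  have h := hc r hr w hw
  clear hw
  induction h with
  | refl => exact ⟨0, fun _ => r, rfl, rfl, by omega⟩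
  | tail _ ha ih =>
    obtain ⟨l, hl⟩ := ih
    exact ⟨l + 1, hl.snoc ha⟩

lemma hdist_self : hdist E r r = 0 :=
  Nat.le_zero.mp (Nat.sInf_le ⟨fun _ => r, rfl, rfl, by omega⟩)

lemma HJoined.hdist_le (h : HJoined E l r w) : hdist E r w ≤ l := Nat.sInf_le h

lemma hjoined_hdist (h : ∃ l, HJoined E l r w) : HJoined E (hdist E r w) r w :=
  Nat.sInf_mem h

lemma eq_of_hdist_eq_zero (h : ∃ l, HJoined E l r w) (h0 : hdist E r w = 0) : w = r := by
  obtain ⟨p, hp0, hpl, -⟩ := hjoined_hdist h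
  rw [← hpl, h0, hp0]

/-- The last step of a shortest walk from the root. -/
lemma HConnected.exists_edge_hdist_lt {V : Finset ℕ} (hc : HConnected V E) (hr : r ∈ V)
    (hv : v ∈ V) (hvr : v ≠ r) : ∃ e ∈ E, v ∈ e ∧ ∃ u ∈ e, hdist E r u < hdist E r v := by
  have hreach := hc.exists_hjoined hr hv
  obtain ⟨p, hp0, hpd, hs⟩ := hjoined_hdist hreach
  set d := hdist E r v
  have hd : d ≠ 0 := fun h0 => hvr (eq_of_hdist_eq_zero hreach h0)
  obtain ⟨-, e, he, hpe, hve⟩ := hs (d - 1) (by omega)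
  rw [Nat.sub_add_cancel (Nat.one_le_iff_ne_zero.mpr hd), hpd] at hve
  have : hdist E r (p (d - 1)) ≤ d - 1 :=
    HJoined.hdist_le ⟨p, hp0, rfl, fun i hi => hs i (by omega)⟩
  exact ⟨e, he, hve, p (d - 1), hpe, by omega⟩

end Walks

noncomputable def markOf (E : Finset (Finset ℕ)) (r : ℕ) (e : Finset ℕ) : ℕ :=
  if h : e.Nonempty then (e.exists_min_image (hdist E r) h).choose else 0

lemma isMarked_markOf {E : Finset (Finset ℕ)} {r : ℕ} {e : Finset ℕ} (h : e.Nonempty) :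
    IsMarked E r e (markOf E r e) := by
  rw [markOf, dif_pos h]
  exact (e.exists_min_image (hdist E r) h).choose_spec

namespace IsPartitionOf

variable {S : Finset ℕ} {P : Finset (Finset ℕ)} {s t : Finset ℕ} {v : ℕ}

lemma subset_of_mem (hP : IsPartitionOf S P) (hs : s ∈ P) : s ⊆ S :=
  hP.2.2 ▸ subset_biUnion_of_mem id hs

lemma exists_mem (hP : IsPartitionOf S P) (hv : v ∈ S) : ∃ s ∈ P, v ∈ s := by
  have : v ∈ P.biUnion id := hP.2.2 ▸ hv
  simpa using this

lemma eq_of_mem_of_mem (hP : IsPartitionOf S P) (hs : s ∈ P) (ht : t ∈ P) (hvs : v ∈ s)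
    (hvt : v ∈ t) : s = t :=
  by_contra fun hst => disjoint_left.mp (hP.2.1 s hs t ht hst) hvs hvt

lemma sum_card (hP : IsPartitionOf S P) : ∑ s ∈ P, s.card = S.card := by
  rw [← hP.2.2]
  exact (card_biUnion fun s hs t ht hst => hP.2.1 s hs t ht hst).symm

end IsPartitionOf

structure IsPruferMarking (E : Finset (Finset ℕ)) (r : ℕ) (P : Finset (Finset ℕ))
    (m : Finset ℕ → ℕ) : Prop where
  isMarked : ∀ e ∈ E, IsMarked E r e (m e)
  image_eq : P = E.image fun e => e.erase (m e)
  injOn : Set.InjOn (fun e : Finset ℕ => e.erase (m e)) ↑E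

namespace IsPruferMarking

variable {V S : Finset ℕ} {E P : Finset (Finset ℕ)} {r u v : ℕ} {m : Finset ℕ → ℕ}
  {e e' : Finset ℕ}

lemma erase_mem (hM : IsPruferMarking E r P m) (he : e ∈ E) : e.erase (m e) ∈ P :=
  hM.image_eq ▸ mem_image_of_mem _ he

lemma eq_of_mem_erase (hM : IsPruferMarking E r P m) (hP : IsPartitionOf S P) (he : e ∈ E)
    (he' : e' ∈ E) (hv : v ∈ e.erase (m e)) (hv' : v ∈ e'.erase (m e')) : e = e' :=
  hM.injOn he he' (hP.eq_of_mem_of_mem (hM.erase_mem he) (hM.erase_mem he') hv hv')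

/-- A vertex `v ≠ m e` of `e` is not the root, so a shortest walk reaches it through some
hyperedge `e'` from a closer vertex; then `v ≠ m e'`, and `e' = e` as reduced edges are
disjoint. -/
lemma hdist_lt (hM : IsPruferMarking E r P m) (hc : HConnected V E) (hr : r ∈ V)
    (hP : IsPartitionOf (V.erase r) P) (he : e ∈ E) (hv : v ∈ e.erase (m e)) :
    hdist E r (m e) < hdist E r v := by
  obtain ⟨hvr, hvV⟩ := mem_erase.mp (hP.subset_of_mem (hM.erase_mem he) hv)
  obtain ⟨e', he', hve', u, hue', hu⟩ := hc.exists_edge_hdist_lt hr hvV hvr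
  have hmu := (hM.isMarked e' he').2 u hue'
  have hv' : v ∈ e'.erase (m e') := mem_erase.mpr ⟨by rintro rfl; omega, hve'⟩
  obtain rfl := hM.eq_of_mem_erase hP he he' hv hv'
  omega

lemma eq_of_isMarked (hM : IsPruferMarking E r P m) (hc : HConnected V E) (hr : r ∈ V)
    (hP : IsPartitionOf (V.erase r) P) (he : e ∈ E) (hu : IsMarked E r e u) : u = m e := by
  by_contra hne
  have := hM.hdist_lt hc hr hP he (mem_erase.mpr ⟨hne, hu.1⟩)
  have := hu.2 (m e) (hM.isMarked e he).1
  omega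

end IsPruferMarking

lemma HasPruferPartition.isPruferMarking_markOf {V : Finset ℕ} {r : ℕ}
    {E P : Finset (Finset ℕ)} (hE : HasPruferPartition V r E P) (hr : r ∈ V)
    (hP : IsPartitionOf (V.erase r) P) : IsPruferMarking E r P (markOf E r) := by
  obtain ⟨hT, m, hm, hPm, hinj⟩ := hE
  have hM : IsPruferMarking E r P m := ⟨hm, hPm, hinj⟩
  have heq : ∀ e ∈ E, markOf E r e = m e := fun e he =>
    hM.eq_of_isMarked hT.2.1 hr hP he (isMarked_markOf ⟨m e, (hm e he).1⟩)
  refine ⟨fun e he => heq e he ▸ hm e he, hPm.trans (image_congr fun e he => ?_),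
    hinj.congr fun e he => ?_⟩ <;> simp only [heq e he]

noncomputable def depth (g : ℕ → ℕ) (r v : ℕ) : ℕ := sInf {n | g^[n] v = r}

def glueEdge (g : ℕ → ℕ) (s : Finset ℕ) : Finset ℕ := s ∪ s.image g

def glueHypergraph (g : ℕ → ℕ) (P : Finset (Finset ℕ)) : Finset (Finset ℕ) :=
  P.image (glueEdge g)

lemma depth_self (g : ℕ → ℕ) (r : ℕ) : depth g r r = 0 :=
  Nat.le_zero.mp (Nat.sInf_le rfl)

namespace Admissible

variable {V : Finset ℕ} {r : ℕ} {P : Finset (Finset ℕ)} {g : ℕ → ℕ} {s : Finset ℕ}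
  {l v w x : ℕ}

lemma iterate_depth (hg : Admissible V r P g) (hv : v ∈ V) : g^[depth g r v] v = r :=
  Nat.sInf_mem (hg.2.2.2.2 v hv)

lemma depth_apply (hg : Admissible V r P g) (hv : v ∈ V) (hvr : v ≠ r) :
    depth g r (g v) + 1 = depth g r v := by
  have hk := hg.iterate_depth hv
  have hpos : depth g r v ≠ 0 := fun h => hvr (by rwa [h] at hk)
  have hle : depth g r (g v) ≤ depth g r v - 1 := Nat.sInf_le <| by
    show g^[depth g r v - 1] (g v) = r
    rwa [← Function.iterate_succ_apply, Nat.succ_eq_add_one, Nat.sub_add_cancel (by omega)]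
  have hge : depth g r v ≤ depth g r (g v) + 1 := Nat.sInf_le <| by
    show g^[depth g r (g v) + 1] v = r
    exact hg.iterate_depth (hg.2.1 v hv)
  omega

lemma apply_ne (hg : Admissible V r P g) (hv : v ∈ V) (hvr : v ≠ r) : g v ≠ v := by
  intro h
  have := hg.depth_apply hv hvr
  rw [h] at this
  omega

lemma apply_notMem_part (hg : Admissible V r P g) (hP : IsPartitionOf (V.erase r) P)
    (hs : s ∈ P) (hx : x ∈ s) : g x ∉ s := by
  intro hgx
  obtain ⟨hgxr, hgxV⟩ := mem_erase.mp (hP.subset_of_mem hs hgx)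
  exact hg.apply_ne hgxV hgxr (hg.2.2.2.1 s hs (g x) hgx x hx)

lemma glueEdge_eq_insert (hg : Admissible V r P g) (hs : s ∈ P) (hx : x ∈ s) :
    glueEdge g s = insert (g x) s := by
  ext y
  simp only [glueEdge, mem_union, mem_image, mem_insert]
  constructor
  · rintro (hy | ⟨z, hz, rfl⟩)
    · exact Or.inr hy
    · exact Or.inl (hg.2.2.2.1 s hs z hz x hx)
  · rintro (rfl | hy)
    · exact Or.inr ⟨x, hx, rfl⟩
    · exact Or.inl hy

lemma erase_glueEdge (hg : Admissible V r P g) (hP : IsPartitionOf (V.erase r) P)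
    (hs : s ∈ P) (hx : x ∈ s) : (glueEdge g s).erase (g x) = s := by
  rw [hg.glueEdge_eq_insert hs hx, erase_insert (hg.apply_notMem_part hP hs hx)]

lemma card_glueEdge (hg : Admissible V r P g) (hP : IsPartitionOf (V.erase r) P)
    (hs : s ∈ P) (hx : x ∈ s) : (glueEdge g s).card = s.card + 1 := by
  rw [hg.glueEdge_eq_insert hs hx, card_insert_of_notMem (hg.apply_notMem_part hP hs hx)]

lemma glueEdge_subset (hg : Admissible V r P g) (hP : IsPartitionOf (V.erase r) P)
    (hs : s ∈ P) : glueEdge g s ⊆ V := by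
  have hsV : s ⊆ V := (hP.subset_of_mem hs).trans (erase_subset r V)
  intro y hy
  rcases mem_union.mp hy with hy | hy
  · exact hsV hy
  · obtain ⟨z, hz, rfl⟩ := mem_image.mp hy
    exact hg.2.1 z (hsV hz)

lemma depth_of_mem_glueEdge (hg : Admissible V r P g) (hP : IsPartitionOf (V.erase r) P)
    (hs : s ∈ P) (hx : x ∈ s) (hw : w ∈ glueEdge g s) :
    w = g x ∨ depth g r w = depth g r (g x) + 1 := by
  rw [hg.glueEdge_eq_insert hs hx, mem_insert] at hw
  refine hw.imp_right fun hws => ?_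
  obtain ⟨hwr, hwV⟩ := mem_erase.mp (hP.subset_of_mem hs hws)
  rw [← hg.2.2.2.1 s hs w hws x hx, hg.depth_apply hwV hwr]

/-- Two distinct parts `s ∋ x` and `t ∋ y` with the same glue edge would force `x = g y` and
`y = g x`, which is incompatible with the depth dropping along `g`. -/
lemma glueEdge_injOn (hg : Admissible V r P g) (hP : IsPartitionOf (V.erase r) P) :
    Set.InjOn (glueEdge g) P := by
  intro s hs t ht hst
  by_contra hne
  have hdisj := hP.2.1 s hs t ht hne
  obtain ⟨x, hx⟩ := hP.1 s hs
  obtain ⟨y, hy⟩ := hP.1 t ht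
  have hxgy : x = g y := by
    have : x ∈ insert (g y) t := hg.glueEdge_eq_insert ht hy ▸ hst ▸ mem_union_left _ hx
    exact (mem_insert.mp this).resolve_right (disjoint_left.mp hdisj hx)
  have hygx : y = g x := by
    have : y ∈ insert (g x) s := hg.glueEdge_eq_insert hs hx ▸ hst.symm ▸ mem_union_left _ hy
    exact (mem_insert.mp this).resolve_right (disjoint_right.mp hdisj hy)
  obtain ⟨hxr, hxV⟩ := mem_erase.mp (hP.subset_of_mem hs hx)
  obtain ⟨hyr, hyV⟩ := mem_erase.mp (hP.subset_of_mem ht hy)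
  have h1 := hg.depth_apply hxV hxr
  have h2 := hg.depth_apply hyV hyr
  rw [← hygx] at h1
  rw [← hxgy] at h2
  omega

lemma hadj_apply (hg : Admissible V r P g) (hP : IsPartitionOf (V.erase r) P) (hv : v ∈ V)
    (hvr : v ≠ r) : HAdj (glueHypergraph g P) (g v) v := by
  obtain ⟨s, hs, hvs⟩ := hP.exists_mem (mem_erase.mpr ⟨hvr, hv⟩)
  exact ⟨hg.apply_ne hv hvr, glueEdge g s, mem_image_of_mem _ hs,
    mem_union_right _ (mem_image_of_mem g hvs), mem_union_left _ hvs⟩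

lemma hjoined_depth (hg : Admissible V r P g) (hP : IsPartitionOf (V.erase r) P)
    (hv : v ∈ V) : HJoined (glueHypergraph g P) (depth g r v) r v := by
  induction hd : depth g r v generalizing v with
  | zero =>
    have := hg.iterate_depth hv
    rw [hd] at this
    exact ⟨fun _ => r, rfl, this.symm, by omega⟩
  | succ n ih =>
    have hvr : v ≠ r := by rintro rfl; rw [depth_self] at hd; omega
    have := hg.depth_apply hv hvr
    exact (ih (hg.2.1 v hv) (by omega)).snoc (hg.hadj_apply hP hv hvr)

lemma depth_le_of_hadj (hg : Admissible V r P g) (hP : IsPartitionOf (V.erase r) P)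
    (h : HAdj (glueHypergraph g P) v w) : depth g r w ≤ depth g r v + 1 := by
  obtain ⟨-, e, he, hv, hw⟩ := h
  obtain ⟨s, hs, rfl⟩ := mem_image.mp he
  obtain ⟨x, hx⟩ := hP.1 s hs
  rcases hg.depth_of_mem_glueEdge hP hs hx hv with rfl | h1 <;>
    rcases hg.depth_of_mem_glueEdge hP hs hx hw with rfl | h2 <;> omega

lemma depth_le_of_hjoined (hg : Admissible V r P g) (hP : IsPartitionOf (V.erase r) P)
    (h : HJoined (glueHypergraph g P) l r v) : depth g r v ≤ l := by
  induction l generalizing v with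
  | zero =>
    obtain ⟨p, h0, hl, -⟩ := h
    rw [← hl, h0, depth_self]
  | succ l ih =>
    obtain ⟨p, h0, hl, hs⟩ := h
    have h1 := ih ⟨p, h0, rfl, fun i hi => hs i (by omega)⟩
    have h2 := hg.depth_le_of_hadj hP (hs l (by omega))
    rw [hl] at h2
    omega

lemma hdist_glueHypergraph (hg : Admissible V r P g) (hP : IsPartitionOf (V.erase r) P)
    (hv : v ∈ V) : hdist (glueHypergraph g P) r v = depth g r v :=
  le_antisymm (hg.hjoined_depth hP hv).hdist_le
    (hg.depth_le_of_hjoined hP (hjoined_hdist ⟨_, hg.hjoined_depth hP hv⟩))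

lemma isHypertree_glueHypergraph (hg : Admissible V r P g) (hr : r ∈ V)
    (hP : IsPartitionOf (V.erase r) P) : IsHypertree V (glueHypergraph g P) := by
  have hcard : ∀ s ∈ P, (glueEdge g s).card = s.card + 1 := fun s hs =>
    hg.card_glueEdge hP hs (hP.1 s hs).choose_spec
  refine ⟨fun e he => ?_, fun v hv w hw => ?_, ?_⟩
  · obtain ⟨s, hs, rfl⟩ := mem_image.mp he
    have := hcard s hs
    have := (hP.1 s hs).card_pos
    exact ⟨hg.glueEdge_subset hP hs, by omega⟩
  · exact (Std.Symm.symm _ _ (hg.hjoined_depth hP hv).reflTransGen).trans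
      (hg.hjoined_depth hP hw).reflTransGen
  · rw [glueHypergraph, sum_image (hg.glueEdge_injOn hP), card_image_of_injOn
      (hg.glueEdge_injOn hP), sum_congr rfl hcard, sum_add_distrib, hP.sum_card,
      card_erase_of_mem hr]
    have := card_pos.mpr ⟨r, hr⟩
    simp only [sum_const, smul_eq_mul, mul_one]
    omega

lemma markOf_glueEdge (hg : Admissible V r P g) (hP : IsPartitionOf (V.erase r) P)
    (hs : s ∈ P) (hx : x ∈ s) : markOf (glueHypergraph g P) r (glueEdge g s) = g x := by
  have hxV : x ∈ V := mem_of_mem_erase (hP.subset_of_mem hs hx)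
  have hgx : g x ∈ glueEdge g s := mem_union_right _ (mem_image_of_mem g hx)
  obtain ⟨hmem, hmin⟩ := isMarked_markOf (E := glueHypergraph g P) (r := r) ⟨_, hgx⟩
  have hle := hmin (g x) hgx
  rw [hg.hdist_glueHypergraph hP (hg.glueEdge_subset hP hs hmem),
    hg.hdist_glueHypergraph hP (hg.2.1 x hxV)] at hle
  rcases hg.depth_of_mem_glueEdge hP hs hx hmem with h | h
  · exact h
  · omega

lemma isPruferMarking_glueHypergraph (hg : Admissible V r P g)
    (hP : IsPartitionOf (V.erase r) P) :
    IsPruferMarking (glueHypergraph g P) r P (markOf (glueHypergraph g P) r) := by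
  have hred : ∀ s ∈ P, (glueEdge g s).erase (markOf (glueHypergraph g P) r (glueEdge g s)) = s :=
    fun s hs => by
      obtain ⟨x, hx⟩ := hP.1 s hs
      rw [hg.markOf_glueEdge hP hs hx, hg.erase_glueEdge hP hs hx]
  refine ⟨fun e he => ?_, ?_, ?_⟩
  · obtain ⟨s, hs, rfl⟩ := mem_image.mp he
    exact isMarked_markOf ⟨_, mem_union_left _ (hP.1 s hs).choose_spec⟩
  · rw [glueHypergraph, image_image]
    exact (image_congr (fun s hs => hred s hs) |>.trans image_id).symm
  · intro e he e' he' hee'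
    obtain ⟨s, hs, rfl⟩ := mem_image.mp (mem_coe.mp he)
    obtain ⟨t, ht, rfl⟩ := mem_image.mp (mem_coe.mp he')
    simp only [hred s hs, hred t ht] at hee'
    rw [hee']

lemma glueRel (hg : Admissible V r P g) (hP : IsPartitionOf (V.erase r) P) :
    GlueRel (glueHypergraph g P) r g := by
  refine ⟨_, (hg.isPruferMarking_glueHypergraph hP).isMarked, fun e he v hv => ?_⟩
  obtain ⟨s, hs, rfl⟩ := mem_image.mp he
  obtain ⟨x, hx⟩ := hP.1 s hs
  rw [hg.markOf_glueEdge hP hs hx] at hv ⊢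
  rw [hg.erase_glueEdge hP hs hx] at hv
  exact hg.2.2.2.1 s hs v hv x hx

end Admissible

lemma Admissible.hasPruferPartition_glueHypergraph {V : Finset ℕ} {r : ℕ}
    {P : Finset (Finset ℕ)} {g : ℕ → ℕ} (hg : Admissible V r P g) (hr : r ∈ V)
    (hP : IsPartitionOf (V.erase r) P) : HasPruferPartition V r (glueHypergraph g P) P := by
  have hM := hg.isPruferMarking_glueHypergraph hP
  exact ⟨hg.isHypertree_glueHypergraph hr hP, _, hM.isMarked, hM.image_eq, hM.injOn⟩

noncomputable def glueMap (E : Finset (Finset ℕ)) (r : ℕ) (v : ℕ) : ℕ :=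
  if h : ∃ e ∈ E, v ∈ e.erase (markOf E r e) then markOf E r h.choose else v

namespace HasPruferPartition

variable {V : Finset ℕ} {r : ℕ} {E P : Finset (Finset ℕ)} {e : Finset ℕ} {v : ℕ}

lemma glueMap_eq (hE : HasPruferPartition V r E P) (hr : r ∈ V)
    (hP : IsPartitionOf (V.erase r) P) (he : e ∈ E) (hv : v ∈ e.erase (markOf E r e)) :
    glueMap E r v = markOf E r e := by
  have h : ∃ e ∈ E, v ∈ e.erase (markOf E r e) := ⟨e, he, hv⟩
  obtain ⟨hce, hcv⟩ := h.choose_spec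
  rw [glueMap, dif_pos h, (hE.isPruferMarking_markOf hr hP).eq_of_mem_erase hP hce he hcv hv]

lemma glueMap_eq_self (hE : HasPruferPartition V r E P) (hr : r ∈ V)
    (hP : IsPartitionOf (V.erase r) P) (hv : v ∉ V.erase r) : glueMap E r v = v := by
  rw [glueMap, dif_neg]
  rintro ⟨e, he, hve⟩
  exact hv (hP.subset_of_mem ((hE.isPruferMarking_markOf hr hP).erase_mem he) hve)

lemma exists_mem_erase_markOf (hE : HasPruferPartition V r E P) (hr : r ∈ V)
    (hP : IsPartitionOf (V.erase r) P) (hv : v ∈ V.erase r) :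
    ∃ e ∈ E, v ∈ e.erase (markOf E r e) := by
  obtain ⟨s, hs, hvs⟩ := hP.exists_mem hv
  rw [(hE.isPruferMarking_markOf hr hP).image_eq] at hs
  obtain ⟨e, he, rfl⟩ := mem_image.mp hs
  exact ⟨e, he, hvs⟩

lemma glueMap_mem (hE : HasPruferPartition V r E P) (hr : r ∈ V)
    (hP : IsPartitionOf (V.erase r) P) (hv : v ∈ V) : glueMap E r v ∈ V := by
  by_cases hvr : v = r
  · rwa [hvr, hE.glueMap_eq_self hr hP (notMem_erase r V)]
  obtain ⟨e, he, hve⟩ := hE.exists_mem_erase_markOf hr hP (mem_erase.mpr ⟨hvr, hv⟩)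
  rw [hE.glueMap_eq hr hP he hve]
  exact (hE.1.1 e he).1 (hE.isPruferMarking_markOf hr hP |>.isMarked e he).1

/-- Each application of the glue map strictly decreases the distance to the root. -/
lemma exists_iterate_glueMap_eq (hE : HasPruferPartition V r E P) (hr : r ∈ V)
    (hP : IsPartitionOf (V.erase r) P) (hv : v ∈ V) : ∃ k, (glueMap E r)^[k] v = r := by
  induction hd : hdist E r v using Nat.strong_induction_on generalizing v with
  | _ n ih =>
    by_cases hvr : v = r
    · exact ⟨0, hvr⟩
    obtain ⟨e, he, hve⟩ := hE.exists_mem_erase_markOf hr hP (mem_erase.mpr ⟨hvr, hv⟩)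
    have hlt := (hE.isPruferMarking_markOf hr hP).hdist_lt hE.1.2.1 hr hP he hve
    have hmV : glueMap E r v ∈ V := hE.glueMap_mem hr hP hv
    rw [hE.glueMap_eq hr hP he hve] at hmV
    obtain ⟨k, hk⟩ := ih _ (hd ▸ hlt) hmV rfl
    exact ⟨k + 1, by rw [Function.iterate_succ_apply, hE.glueMap_eq hr hP he hve, hk]⟩

lemma admissible_glueMap (hE : HasPruferPartition V r E P) (hr : r ∈ V)
    (hP : IsPartitionOf (V.erase r) P) : Admissible V r P (glueMap E r) := by
  refine ⟨hE.glueMap_eq_self hr hP (notMem_erase r V), fun v => hE.glueMap_mem hr hP,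
    fun v hv => hE.glueMap_eq_self hr hP fun h => hv (mem_of_mem_erase h),
    fun s hs v hv w hw => ?_, fun v => hE.exists_iterate_glueMap_eq hr hP⟩
  rw [(hE.isPruferMarking_markOf hr hP).image_eq] at hs
  obtain ⟨e, he, rfl⟩ := mem_image.mp hs
  rw [hE.glueMap_eq hr hP he hv, hE.glueMap_eq hr hP he hw]

lemma glueHypergraph_glueMap (hE : HasPruferPartition V r E P) (hr : r ∈ V)
    (hP : IsPartitionOf (V.erase r) P) : glueHypergraph (glueMap E r) P = E := by
  have hM := hE.isPruferMarking_markOf hr hP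
  have hg := hE.admissible_glueMap hr hP
  have hedge : ∀ e ∈ E, glueEdge (glueMap E r) (e.erase (markOf E r e)) = e := by
    intro e he
    have hcard := (hE.1.1 e he).2
    obtain ⟨x, hx⟩ : (e.erase (markOf E r e)).Nonempty := by
      rw [← card_pos, card_erase_of_mem (hM.isMarked e he).1]
      omega
    rw [hg.glueEdge_eq_insert (hM.erase_mem he) hx, hE.glueMap_eq hr hP he hx,
      insert_erase (hM.isMarked e he).1]
  rw [glueHypergraph, hM.image_eq, image_image]
  exact (image_congr hedge).trans image_id

end HasPruferPartition

lemma Admissible.glueMap_glueHypergraph {V : Finset ℕ} {r : ℕ} {P : Finset (Finset ℕ)}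
    {g : ℕ → ℕ} (hg : Admissible V r P g) (hr : r ∈ V) (hP : IsPartitionOf (V.erase r) P) :
    glueMap (glueHypergraph g P) r = g := by
  have hE := hg.hasPruferPartition_glueHypergraph hr hP
  funext v
  by_cases hv : v ∈ V.erase r
  · obtain ⟨s, hs, hvs⟩ := hP.exists_mem hv
    have hred : v ∈ (glueEdge g s).erase (markOf (glueHypergraph g P) r (glueEdge g s)) := by
      rwa [hg.markOf_glueEdge hP hs hvs, hg.erase_glueEdge hP hs hvs]
    rw [hE.glueMap_eq hr hP (mem_image_of_mem _ hs) hred, hg.markOf_glueEdge hP hs hvs]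
  rw [hE.glueMap_eq_self hr hP hv]
  by_cases hvV : v ∈ V
  · obtain rfl : v = r := by_contra fun hvr => hv (mem_erase.mpr ⟨hvr, hvV⟩)
    exact hg.1.symm
  · exact (hg.2.2.1 v hvV).symm

/-- `P`-admissible maps are in one-to-one correspondence with
`r`-rooted hypertrees having vertex set `V` and Prüfer partition `P`, the
correspondence associating to each admissible map the hypertree having it as
glue map. -/
theorem stmt12 (V : Finset ℕ) (r : ℕ) (hr : r ∈ V)
    (P : Finset (Finset ℕ)) (hP : IsPartitionOf (V.erase r) P) :
    ∃ Φ : {g : ℕ → ℕ // Admissible V r P g} ≃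
          {E : Finset (Finset ℕ) // HasPruferPartition V r E P},
      ∀ g : {g : ℕ → ℕ // Admissible V r P g}, GlueRel (Φ g).1 r g.1 :=
  ⟨{ toFun := fun g => ⟨glueHypergraph g.1 P, g.2.hasPruferPartition_glueHypergraph hr hP⟩
     invFun := fun E => ⟨glueMap E.1 r, E.2.admissible_glueMap hr hP⟩
     left_inv := fun g => Subtype.ext (g.2.glueMap_glueHypergraph hr hP)
     right_inv := fun E => Subtype.ext (E.2.glueHypergraph_glueMap hr hP) },
    fun g => g.2.glueRel hP⟩
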